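/- Every finite connected graph with Euler characteristic -1 and no vertices of degree 1 is a figure-eight graph, a barbell graph, or a theta graph. -/

import Mathlib

/-- A multigraph: vertices, edges, and tail/head maps (loops and parallel
edges allowed). -/
structure MGraph where
  V : Type
  E : Type
  tail : E → V
  head : E → V

namespace MGraph

variable (G : MGraph)

/-- Directed edges: an edge together with an orientation. -/
abbrev Dir := G.E × Bool

/-- The tail of a directed edge. -/
def dtail : G.Dir → G.V := fun d => if d.2 then G.tail d.1 else G.head d.1

/-- The head of a directed edge. -/
def dhead : G.Dir → G.V := fun d => if d.2 then G.head d.1 else G.tail d.1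

/-- The inverse (reversal) of a directed edge. -/
def dinv : G.Dir → G.Dir := fun d => (d.1, !d.2)

/-- A walk is a list of directed edges in which the head of each directed edge
is the tail of the next one. -/
def IsWalk (w : List G.Dir) : Prop :=
  w.Chain' (fun a b => G.dhead a = G.dtail b)

/-- A walk is non-backtracking if no directed edge is immediately followed by
its inverse. -/
def NonBack (w : List G.Dir) : Prop :=
  w.Chain' (fun a b => b ≠ G.dinv a)

/-- The starting vertex of a (nonempty) walk. -/
def wstart (w : List G.Dir) : Option G.V := w.head?.map G.dtail

/-- The terminating vertex of a (nonempty) walk. -/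
def wend (w : List G.Dir) : Option G.V := w.getLast?.map G.dhead

/-- A walk is closed if it is nontrivial and its endpoints coincide. -/
def Closed (w : List G.Dir) : Prop := w ≠ [] ∧ G.wstart w = G.wend w

/-- The number of times the directed edge `d` is traversed by the walk `w`. -/
noncomputable def cnt (w : List G.Dir) (d : G.Dir) : ℕ :=
  letI := Classical.decEq G.Dir
  w.count d

/-- A walk is edge neutral if it traverses each edge the same number of times
in each direction. -/
def EdgeNeutral (w : List G.Dir) : Prop :=
  ∀ e : G.E, G.cnt w (e, true) = G.cnt w (e, false)

/-- The girth: the minimal length of a nontrivial closed non-backtracking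
walk (`⊤` if none exists). -/
noncomputable def girth : ℕ∞ :=
  sInf {n : ℕ∞ | ∃ w : List G.Dir,
    G.IsWalk w ∧ G.NonBack w ∧ G.Closed w ∧ n = w.length}

/-- The abelian girth: the minimal length of a nontrivial closed
non-backtracking edge-neutral walk (`⊤` if none exists). -/
noncomputable def ablGirth : ℕ∞ :=
  sInf {n : ℕ∞ | ∃ w : List G.Dir,
    G.IsWalk w ∧ G.NonBack w ∧ G.Closed w ∧ G.EdgeNeutral w ∧ n = w.length}

/-- The degree of a vertex: the number of directed edges with tail `v`
(so a loop contributes 2). -/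
noncomputable def deg (v : G.V) : ℕ := Nat.card {d : G.Dir // G.dtail d = v}

/-- Adjacency via a directed edge. -/
def adj (u v : G.V) : Prop := ∃ d : G.Dir, G.dtail d = u ∧ G.dhead d = v

/-- A graph is connected if it is nonempty and any two vertices are joined by
a walk. -/
def Connected : Prop :=
  Nonempty G.V ∧ ∀ u v : G.V, Relation.ReflTransGen G.adj u v

/-- The Euler characteristic `|V| - |E|`. -/
noncomputable def eulerChar : ℤ := (Nat.card G.V : ℤ) - (Nat.card G.E : ℤ)

/-- A walk traverses each edge at most once (in either direction). -/
def EdgesDistinct (w : List G.Dir) : Prop :=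
  ∀ e : G.E, G.cnt w (e, true) + G.cnt w (e, false) ≤ 1

/-- The edge `e` occurs in the walk `w` (in some direction). -/
def edgeIn (w : List G.Dir) (e : G.E) : Prop := (e, true) ∈ w ∨ (e, false) ∈ w

/-- The vertex `x` is visited by the walk `w`. -/
def vtxIn (w : List G.Dir) (x : G.V) : Prop :=
  (∃ d ∈ w, G.dtail d = x) ∨ (∃ d ∈ w, G.dhead d = x)

/-- A cycle based at `v`: a nontrivial strongly closed non-backtracking walk
from `v` to `v` traversing each edge at most once. -/
def IsCycleAt (v : G.V) (w : List G.Dir) : Prop :=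
  G.IsWalk w ∧ G.NonBack w ∧ G.wstart w = some v ∧ G.wend w = some v ∧
    G.EdgesDistinct w ∧
    (∀ a b : G.Dir, w.head? = some a → w.getLast? = some b → a ≠ G.dinv b)

/-- A path from `u` to `v`: a non-backtracking walk from `u` to `v`
traversing each edge at most once. -/
def IsPathBetween (u v : G.V) (w : List G.Dir) : Prop :=
  G.IsWalk w ∧ G.NonBack w ∧ G.wstart w = some u ∧ G.wend w = some v ∧
    G.EdgesDistinct w

/-- One elementary reduction step on a walk: deleting a reversal, i.e. an
adjacent pair consisting of a directed edge and its inverse. -/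
def RStep (w w' : List G.Dir) : Prop :=
  ∃ (pre suf : List G.Dir) (d : G.Dir),
    w = pre ++ d :: G.dinv d :: suf ∧ w' = pre ++ suf

end MGraph

namespace MGraph

variable (G : MGraph)

/-- `G` is a figure-eight graph: two edge-disjoint cycles sharing exactly one
vertex and covering all edges. -/
def IsFigureEight : Prop :=
  ∃ (v : G.V) (c₁ c₂ : List G.Dir),
    G.IsCycleAt v c₁ ∧ G.IsCycleAt v c₂ ∧
    (∀ e : G.E, ¬(G.edgeIn c₁ e ∧ G.edgeIn c₂ e)) ∧
    (∀ x : G.V, G.vtxIn c₁ x → G.vtxIn c₂ x → x = v) ∧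
    (∀ e : G.E, G.edgeIn c₁ e ∨ G.edgeIn c₂ e)

/-- `G` is a barbell graph: two disjoint cycles joined by a bar of positive
length, all mutually edge-disjoint, covering all edges. -/
def IsBarbell : Prop :=
  ∃ (u v : G.V) (c₁ c₂ p : List G.Dir),
    u ≠ v ∧ G.IsCycleAt u c₁ ∧ G.IsCycleAt v c₂ ∧ G.IsPathBetween u v p ∧
    (∀ e : G.E, ¬(G.edgeIn c₁ e ∧ G.edgeIn c₂ e)) ∧
    (∀ e : G.E, ¬(G.edgeIn c₁ e ∧ G.edgeIn p e)) ∧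
    (∀ e : G.E, ¬(G.edgeIn c₂ e ∧ G.edgeIn p e)) ∧
    (∀ x : G.V, G.vtxIn c₁ x → G.vtxIn c₂ x → False) ∧
    (∀ x : G.V, G.vtxIn p x → G.vtxIn c₁ x → x = u) ∧
    (∀ x : G.V, G.vtxIn p x → G.vtxIn c₂ x → x = v) ∧
    (∀ e : G.E, G.edgeIn c₁ e ∨ G.edgeIn c₂ e ∨ G.edgeIn p e)

/-- `G` is a theta graph: two distinct vertices joined by three pairwise
edge-disjoint, internally disjoint paths covering all edges. -/
def IsTheta : Prop :=
  ∃ (u v : G.V) (p₁ p₂ p₃ : List G.Dir),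
    u ≠ v ∧ G.IsPathBetween u v p₁ ∧ G.IsPathBetween u v p₂ ∧
    G.IsPathBetween u v p₃ ∧
    (∀ e : G.E, ¬(G.edgeIn p₁ e ∧ G.edgeIn p₂ e)) ∧
    (∀ e : G.E, ¬(G.edgeIn p₁ e ∧ G.edgeIn p₃ e)) ∧
    (∀ e : G.E, ¬(G.edgeIn p₂ e ∧ G.edgeIn p₃ e)) ∧
    (∀ x : G.V, G.vtxIn p₁ x → G.vtxIn p₂ x → x = u ∨ x = v) ∧
    (∀ x : G.V, G.vtxIn p₁ x → G.vtxIn p₃ x → x = u ∨ x = v) ∧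
    (∀ x : G.V, G.vtxIn p₂ x → G.vtxIn p₃ x → x = u ∨ x = v) ∧
    (∀ e : G.E, G.edgeIn p₁ e ∨ G.edgeIn p₂ e ∨ G.edgeIn p₃ e)

end MGraph

/-!
Since `|E| = |V| + 1`, the degrees sum to `2|V| + 2`; as no degree is 0 or 1, either one vertex
has degree 4 or two have degree 3, and all others have degree 2. Leaving a vertex of degree `≠ 2`
along a dart and continuing through the degree-2 vertices traces a branch, which stops at a vertex
of degree `≠ 2`. Reversing branches is a fixed-point-free involution `opp` on the darts at such
vertices; branches that are not reversals of each other share no edge and no interior vertex, and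
by connectedness the branches cover the graph. So the four darts at a degree-4 vertex form two
loops (figure eight). At two degree-3 vertices `u, v`, either some branch returns to `u`, the third
dart at `u` is then a bar to `v` and the other two darts at `v` form a loop (barbell), or all three
branches from `u` end at `v` (theta).
-/

lemma Fintype.exists_of_sum_eq_two {ι : Type*} [Fintype ι] [DecidableEq ι] {f : ι → ℕ}
    (h : ∑ i, f i = 2) :
    (∃ a, f a = 2 ∧ ∀ b, f b ≠ 0 → b = a) ∨
      ∃ a b, a ≠ b ∧ f a = 1 ∧ f b = 1 ∧ ∀ c, f c ≠ 0 → c = a ∨ c = b := by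
  set S := Finset.univ.filter (f · ≠ 0)
  have hS : ∑ i ∈ S, f i = 2 := by rw [Finset.sum_filter_ne_zero]; exact h
  have hmem : ∀ c, c ∈ S ↔ f c ≠ 0 := by simp [S]
  have hcard : S.card ≤ 2 := by
    calc S.card = ∑ i ∈ S, 1 := by simp
      _ ≤ ∑ i ∈ S, f i :=
        Finset.sum_le_sum fun i hi => Nat.one_le_iff_ne_zero.2 ((hmem i).1 hi)
      _ = 2 := hS
  interval_cases hc : S.card
  · simp_all [Finset.card_eq_zero]
  · obtain ⟨a, ha⟩ := Finset.card_eq_one.1 hc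
    rw [ha, Finset.sum_singleton] at hS
    exact Or.inl ⟨a, hS, fun b hb => by simpa [ha] using (hmem b).2 hb⟩
  · obtain ⟨a, b, hab, hab'⟩ := Finset.card_eq_two.1 hc
    have ha := (hmem a).1 (by simp [hab'])
    have hb := (hmem b).1 (by simp [hab'])
    rw [hab', Finset.sum_pair hab] at hS
    exact Or.inr ⟨a, b, hab, by omega, by omega,
      fun c hc => by simpa [hab'] using (hmem c).2 hc⟩

namespace MGraph

variable (G : MGraph)

section Darts

lemma dinv_dinv (d : G.Dir) : G.dinv (G.dinv d) = d := by
  simp [dinv]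

lemma dinv_ne_self (d : G.Dir) : G.dinv d ≠ d := by
  simp [dinv, Prod.ext_iff]

lemma dinv_injective : Function.Injective G.dinv :=
  Function.LeftInverse.injective G.dinv_dinv

lemma dtail_dinv (d : G.Dir) : G.dtail (G.dinv d) = G.dhead d := by
  obtain ⟨e, _ | _⟩ := d <;> rfl

lemma dhead_dinv (d : G.Dir) : G.dhead (G.dinv d) = G.dtail d := by
  rw [← G.dtail_dinv, G.dinv_dinv]

lemma eq_or_eq_dinv_of_fst_eq {a b : G.Dir} (h : a.1 = b.1) : a = b ∨ a = G.dinv b := by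
  obtain ⟨e, s⟩ := a
  obtain ⟨e', s'⟩ := b
  obtain rfl : e = e' := h
  cases s <;> cases s' <;> simp [dinv]

lemma edgeIn_iff_exists_mem {w : List G.Dir} {e : G.E} :
    G.edgeIn w e ↔ ∃ c ∈ w, c.1 = e := by
  constructor
  · rintro (h | h) <;> exact ⟨_, h, rfl⟩
  · rintro ⟨⟨e, _ | _⟩, hc, rfl⟩
    exacts [Or.inr hc, Or.inl hc]

lemma edgesDistinct_of_nodup {w : List G.Dir} (hw : w.Nodup) (hinv : ∀ c ∈ w, G.dinv c ∉ w) :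
    G.EdgesDistinct w := by
  let := Classical.decEq G.Dir -- the instance `cnt` counts with
  intro e
  have hle := List.nodup_iff_count_le_one.mp hw
  by_cases ht : (e, true) ∈ w
  · have hf : w.count (e, false) = 0 := List.count_eq_zero_of_not_mem (hinv _ ht)
    have := hle (e, true)
    unfold cnt
    omega
  · have ht : w.count (e, true) = 0 := List.count_eq_zero_of_not_mem ht
    have := hle (e, false)
    unfold cnt
    omega

end Darts

section Degree

lemma deg_eq_card_filter [Fintype G.Dir] [DecidableEq G.V] (x : G.V) :
    G.deg x = (Finset.univ.filter (G.dtail · = x)).card := by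
  rw [deg, Nat.card_eq_fintype_card, Fintype.card_subtype]

variable [Finite G.E]

instance : Finite G.Dir := inferInstanceAs (Finite (G.E × Bool))

lemma mem_of_length_eq_deg {x : G.V} {L : List G.Dir} (hL : L.Nodup)
    (htail : ∀ d ∈ L, G.dtail d = x) (hlen : L.length = G.deg x) {c : G.Dir}
    (hc : G.dtail c = x) : c ∈ L := by
  classical
  have := Fintype.ofFinite G.Dir
  have hsub : L.toFinset ⊆ Finset.univ.filter (G.dtail · = x) := fun d hd => by
    simpa using htail d (List.mem_toFinset.mp hd)
  have heq := Finset.eq_of_subset_of_card_le hsub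
    (by rw [List.toFinset_card_of_nodup hL, hlen, G.deg_eq_card_filter])
  have hcL : c ∈ L.toFinset := by rw [heq]; simpa using hc
  simpa using hcL

lemma exists_dtail_eq_not_mem {x : G.V} (L : List G.Dir) (hL : L.length < G.deg x) :
    ∃ d, G.dtail d = x ∧ d ∉ L := by
  classical
  have := Fintype.ofFinite G.Dir
  by_contra! h
  have hsub : Finset.univ.filter (G.dtail · = x) ⊆ L.toFinset := fun d hd => by
    simpa using h d (by simpa using hd)
  have := (Finset.card_le_card hsub).trans (List.toFinset_card_le L)
  rw [← G.deg_eq_card_filter] at this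
  omega

lemma deg_ne_zero (hconn : G.Connected) [Nonempty G.E] (v : G.V) : G.deg v ≠ 0 := by
  obtain ⟨e⟩ := ‹Nonempty G.E›
  suffices ∃ d, G.dtail d = v by
    obtain ⟨d, rfl⟩ := this
    exact Nat.card_ne_zero.mpr ⟨⟨⟨d, rfl⟩⟩, inferInstance⟩
  induction hconn.2 (G.dtail (e, true)) v with
  | refl => exact ⟨_, rfl⟩
  | tail _ hadj _ =>
    obtain ⟨c, -, hc⟩ := hadj
    exact ⟨G.dinv c, by rw [G.dtail_dinv, hc]⟩

lemma sum_deg [Fintype G.V] : ∑ v, G.deg v = 2 * Nat.card G.E := by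
  unfold deg
  rw [← Nat.card_sigma, Nat.card_congr (Equiv.sigmaFiberEquiv G.dtail), Dir, Nat.card_prod,
    Nat.card_eq_fintype_card (α := Bool), Fintype.card_bool, mul_comm]

end Degree

section Branch

lemma eq_of_deg_eq_two {x : G.V} (h2 : G.deg x = 2) {a b c : G.Dir}
    (ha : G.dtail a = x) (hb : G.dtail b = x) (hc : G.dtail c = x)
    (hba : b ≠ a) (hca : c ≠ a) : b = c := by
  rw [deg, Nat.card_eq_two_iff' (⟨a, ha⟩ : {d : G.Dir // G.dtail d = x})] at h2
  obtain ⟨y, -, hy⟩ := h2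
  have hb' := hy ⟨b, hb⟩ (by simpa [Subtype.ext_iff] using hba)
  have hc' := hy ⟨c, hc⟩ (by simpa [Subtype.ext_iff] using hca)
  exact congrArg Subtype.val (hb'.trans hc'.symm)

/-- The dart continuing `d` through its head; a junk value unless the head has degree 2. -/
noncomputable def nextDart (d : G.Dir) : G.Dir :=
  haveI : Nonempty G.Dir := ⟨d⟩
  Classical.epsilon fun c => G.dtail c = G.dhead d ∧ c ≠ G.dinv d

noncomputable def branchDart (d : G.Dir) (n : ℕ) : G.Dir := G.nextDart^[n] d

lemma branchDart_zero (d : G.Dir) : G.branchDart d 0 = d := rfl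

lemma branchDart_succ (d : G.Dir) (n : ℕ) :
    G.branchDart d (n + 1) = G.nextDart (G.branchDart d n) :=
  Function.iterate_succ_apply' _ _ _

open Classical in
noncomputable def lastIdx (d : G.Dir) : ℕ :=
  if h : ∃ n, G.deg (G.dhead (G.branchDart d n)) ≠ 2 then Nat.find h else 0

lemma lastIdx_eq {d : G.Dir} {n : ℕ} (hn : G.deg (G.dhead (G.branchDart d n)) ≠ 2)
    (hlt : ∀ j < n, G.deg (G.dhead (G.branchDart d j)) = 2) : G.lastIdx d = n := by
  classical
  rw [lastIdx, dif_pos ⟨n, hn⟩, Nat.find_eq_iff]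
  exact ⟨hn, fun j hj => not_not.2 (hlt j hj)⟩

/-- The first dart of the reversed branch. -/
noncomputable def opp (d : G.Dir) : G.Dir := G.dinv (G.branchDart d (G.lastIdx d))

noncomputable def branch (d : G.Dir) : List G.Dir :=
  (List.range (G.lastIdx d + 1)).map (G.branchDart d)

lemma mem_branch {d c : G.Dir} :
    c ∈ G.branch d ↔ ∃ j ≤ G.lastIdx d, G.branchDart d j = c := by
  simp [branch]

lemma start_mem_branch (d : G.Dir) : d ∈ G.branch d :=
  G.mem_branch.2 ⟨0, Nat.zero_le _, rfl⟩

lemma dinv_opp_mem_branch (d : G.Dir) : G.dinv (G.opp d) ∈ G.branch d := by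
  rw [opp, G.dinv_dinv]
  exact G.mem_branch.2 ⟨_, le_rfl, rfl⟩

variable [Finite G.E]

lemma nextDart_spec {d : G.Dir} (h2 : G.deg (G.dhead d) = 2) :
    G.dtail (G.nextDart d) = G.dhead d ∧ G.nextDart d ≠ G.dinv d := by
  have : Nonempty G.Dir := ⟨d⟩
  obtain ⟨c, hc, hcd⟩ := G.exists_dtail_eq_not_mem (x := G.dhead d) [G.dinv d] (by simp [h2])
  exact Classical.epsilon_spec (p := fun c => G.dtail c = G.dhead d ∧ c ≠ G.dinv d)
    ⟨c, hc, by simpa using hcd⟩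

lemma eq_nextDart {d c : G.Dir} (h2 : G.deg (G.dhead d) = 2)
    (hc : G.dtail c = G.dhead d) (hcd : c ≠ G.dinv d) : c = G.nextDart d :=
  G.eq_of_deg_eq_two h2 (G.dtail_dinv d) hc (G.nextDart_spec h2).1 hcd (G.nextDart_spec h2).2

lemma nextDart_dinv_nextDart {d : G.Dir} (h2 : G.deg (G.dhead d) = 2) :
    G.nextDart (G.dinv (G.nextDart d)) = G.dinv d := by
  obtain ⟨htail, hne⟩ := G.nextDart_spec h2
  have hhead : G.dhead (G.dinv (G.nextDart d)) = G.dhead d := by rw [G.dhead_dinv, htail]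
  refine (G.eq_nextDart (hhead ▸ h2) (by rw [G.dtail_dinv, hhead]) ?_).symm
  rw [G.dinv_dinv]
  exact hne.symm

lemma nextDart_inj {a b : G.Dir} (ha : G.deg (G.dhead a) = 2) (hb : G.deg (G.dhead b) = 2)
    (h : G.nextDart a = G.nextDart b) : a = b :=
  G.dinv_injective <| by rw [← G.nextDart_dinv_nextDart ha, h, G.nextDart_dinv_nextDart hb]

lemma dtail_branchDart_succ {d : G.Dir} {n : ℕ} (h2 : G.deg (G.dhead (G.branchDart d n)) = 2) :
    G.dtail (G.branchDart d (n + 1)) = G.dhead (G.branchDart d n) := by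
  rw [G.branchDart_succ]
  exact (G.nextDart_spec h2).1

lemma eq_of_branchDart_eq {a b : G.Dir} (ha : G.deg (G.dtail a) ≠ 2)
    (hb : G.deg (G.dtail b) ≠ 2) {j k : ℕ}
    (hA : ∀ i < j, G.deg (G.dhead (G.branchDart a i)) = 2)
    (hB : ∀ i < k, G.deg (G.dhead (G.branchDart b i)) = 2)
    (h : G.branchDart a j = G.branchDart b k) : a = b ∧ j = k := by
  induction j generalizing k with
  | zero =>
    cases k with
    | zero => exact ⟨h, rfl⟩
    | succ k =>
      refine absurd ?_ ha
      rw [show a = G.branchDart b (k + 1) from h, G.dtail_branchDart_succ (hB k k.lt_succ_self)]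
      exact hB k k.lt_succ_self
  | succ j ih =>
    cases k with
    | zero =>
      refine absurd ?_ hb
      rw [show b = G.branchDart a (j + 1) from h.symm,
        G.dtail_branchDart_succ (hA j j.lt_succ_self)]
      exact hA j j.lt_succ_self
    | succ k =>
      rw [G.branchDart_succ, G.branchDart_succ] at h
      obtain ⟨rfl, rfl⟩ := ih (fun i hi => hA i (by omega)) (fun i hi => hB i (by omega))
        (G.nextDart_inj (hA j j.lt_succ_self) (hB k k.lt_succ_self) h)
      exact ⟨rfl, rfl⟩

lemma exists_deg_dhead_branchDart_ne_two {d : G.Dir} (hd : G.deg (G.dtail d) ≠ 2) :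
    ∃ n, G.deg (G.dhead (G.branchDart d n)) ≠ 2 := by
  by_contra! h
  obtain ⟨m, n, hmn, heq⟩ := Finite.exists_ne_map_eq_of_infinite (G.branchDart d)
  exact hmn (G.eq_of_branchDart_eq hd hd (fun i _ => h i) (fun i _ => h i) heq).2

section OneBranch

variable {d : G.Dir} (hd : G.deg (G.dtail d) ≠ 2)
include hd

lemma deg_dhead_lastIdx : G.deg (G.dhead (G.branchDart d (G.lastIdx d))) ≠ 2 := by
  classical
  have h := G.exists_deg_dhead_branchDart_ne_two hd
  rw [lastIdx, dif_pos h]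
  exact Nat.find_spec h

lemma deg_dhead_of_lt_lastIdx {j : ℕ} (hj : j < G.lastIdx d) :
    G.deg (G.dhead (G.branchDart d j)) = 2 := by
  classical
  have h := G.exists_deg_dhead_branchDart_ne_two hd
  rw [lastIdx, dif_pos h] at hj
  exact not_not.1 (Nat.find_min h hj)

lemma dtail_branchDart_succ_of_lt {j : ℕ} (hj : j < G.lastIdx d) :
    G.dtail (G.branchDart d (j + 1)) = G.dhead (G.branchDart d j) :=
  G.dtail_branchDart_succ (G.deg_dhead_of_lt_lastIdx hd hj)

lemma branchDart_succ_ne_dinv {j : ℕ} (hj : j < G.lastIdx d) :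
    G.branchDart d (j + 1) ≠ G.dinv (G.branchDart d j) := by
  rw [G.branchDart_succ]
  exact (G.nextDart_spec (G.deg_dhead_of_lt_lastIdx hd hj)).2

lemma eq_branchDart_or_eq_dinv {j : ℕ} (hj : j < G.lastIdx d) {c : G.Dir}
    (hc : G.dtail c = G.dhead (G.branchDart d j)) :
    c = G.branchDart d (j + 1) ∨ c = G.dinv (G.branchDart d j) := by
  by_cases hcd : c = G.dinv (G.branchDart d j)
  · exact Or.inr hcd
  · rw [G.branchDart_succ]
    exact Or.inl (G.eq_nextDart (G.deg_dhead_of_lt_lastIdx hd hj) hc hcd)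

lemma deg_dtail_opp : G.deg (G.dtail (G.opp d)) ≠ 2 := by
  rw [opp, G.dtail_dinv]
  exact G.deg_dhead_lastIdx hd

lemma branchDart_opp {j : ℕ} (hj : j ≤ G.lastIdx d) :
    G.branchDart (G.opp d) j = G.dinv (G.branchDart d (G.lastIdx d - j)) := by
  induction j with
  | zero => rfl
  | succ j ih =>
    obtain ⟨k, hk⟩ : ∃ k, G.lastIdx d - j = k + 1 := ⟨G.lastIdx d - j - 1, by omega⟩
    rw [G.branchDart_succ, ih (by omega), hk, G.branchDart_succ,
      G.nextDart_dinv_nextDart (G.deg_dhead_of_lt_lastIdx hd (by omega))]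
    congr 2
    omega

lemma lastIdx_opp : G.lastIdx (G.opp d) = G.lastIdx d := by
  refine G.lastIdx_eq ?_ fun j hj => ?_
  · rw [G.branchDart_opp hd le_rfl, Nat.sub_self, G.dhead_dinv]
    exact hd
  · obtain ⟨k, hk⟩ : ∃ k, G.lastIdx d - j = k + 1 := ⟨G.lastIdx d - j - 1, by omega⟩
    rw [G.branchDart_opp hd hj.le, G.dhead_dinv, hk, G.dtail_branchDart_succ_of_lt hd (by omega)]
    exact G.deg_dhead_of_lt_lastIdx hd (by omega)

lemma opp_opp : G.opp (G.opp d) = d := by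
  rw [opp, G.lastIdx_opp hd, G.branchDart_opp hd le_rfl, Nat.sub_self, G.dinv_dinv]
  rfl

lemma dinv_branchDart {k : ℕ} (hk : k ≤ G.lastIdx d) :
    G.dinv (G.branchDart d k) = G.branchDart (G.opp d) (G.lastIdx d - k) := by
  rw [G.branchDart_opp hd (Nat.sub_le _ _), Nat.sub_sub_self hk]

/-- A branch is never its own reversal: otherwise its middle dart, or middle pair of darts,
would be reversed onto itself. -/
lemma opp_ne_self : G.opp d ≠ d := by
  intro h
  have key : ∀ j ≤ G.lastIdx d, G.branchDart d j = G.dinv (G.branchDart d (G.lastIdx d - j)) :=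
    fun j hj => by simpa only [h] using G.branchDart_opp hd hj
  obtain ⟨j, hN | hN⟩ : ∃ j, G.lastIdx d = 2 * j ∨ G.lastIdx d = 2 * j + 1 :=
    ⟨G.lastIdx d / 2, by omega⟩
  · have hj := key j (by omega)
    rw [show G.lastIdx d - j = j by omega] at hj
    exact G.dinv_ne_self _ hj.symm
  · have hj := key j (by omega)
    rw [show G.lastIdx d - j = j + 1 by omega] at hj
    exact G.branchDart_succ_ne_dinv hd (j := j) (by omega) (by rw [hj, G.dinv_dinv])

end OneBranch

lemma ne_opp_comm {a b : G.Dir} (hb : G.deg (G.dtail b) ≠ 2) (h : b ≠ G.opp a) :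
    a ≠ G.opp b := by
  rintro rfl
  exact h (G.opp_opp hb).symm

section TwoBranches

variable {a b : G.Dir} (ha : G.deg (G.dtail a) ≠ 2) (hb : G.deg (G.dtail b) ≠ 2)
include ha hb

lemma branchDart_eq_branchDart {j k : ℕ} (hj : j ≤ G.lastIdx a) (hk : k ≤ G.lastIdx b)
    (h : G.branchDart a j = G.branchDart b k) : a = b ∧ j = k :=
  G.eq_of_branchDart_eq ha hb (fun _ hi => G.deg_dhead_of_lt_lastIdx ha (by omega))
    (fun _ hi => G.deg_dhead_of_lt_lastIdx hb (by omega)) h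

lemma opp_inj : G.opp a = G.opp b ↔ a = b :=
  ⟨fun h => by rw [← G.opp_opp ha, h, G.opp_opp hb], congrArg G.opp⟩

lemma eq_opp_of_branchDart_eq_dinv {j k : ℕ} (hj : j ≤ G.lastIdx a) (hk : k ≤ G.lastIdx b)
    (h : G.branchDart a j = G.dinv (G.branchDart b k)) : a = G.opp b :=
  (G.branchDart_eq_branchDart ha (G.deg_dtail_opp hb) hj (k := G.lastIdx b - k)
    (by rw [G.lastIdx_opp hb]; omega) (h.trans (G.dinv_branchDart hb hk))).1

lemma eq_or_eq_opp_of_fst_branchDart_eq {j k : ℕ} (hj : j ≤ G.lastIdx a)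
    (hk : k ≤ G.lastIdx b) (h : (G.branchDart a j).1 = (G.branchDart b k).1) :
    b = a ∨ b = G.opp a := by
  rcases G.eq_or_eq_dinv_of_fst_eq h with h | h
  · exact Or.inl (G.branchDart_eq_branchDart ha hb hj hk h).1.symm
  · right
    rw [G.eq_opp_of_branchDart_eq_dinv ha hb hj hk h, G.opp_opp hb]

end TwoBranches

section OneBranch

variable {d : G.Dir} (hd : G.deg (G.dtail d) ≠ 2)
include hd

lemma branch_isPath : G.IsPathBetween (G.dtail d) (G.dtail (G.opp d)) (G.branch d) := by
  refine ⟨?_, ?_, ?_, ?_, G.edgesDistinct_of_nodup ?_ ?_⟩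
  · rw [IsWalk, branch, List.Chain', List.isChain_map, List.isChain_range_succ]
    exact fun j hj => (G.dtail_branchDart_succ_of_lt hd hj).symm
  · rw [NonBack, branch, List.Chain', List.isChain_map, List.isChain_range_succ]
    exact fun j hj => G.branchDart_succ_ne_dinv hd hj
  · simp [wstart, branch, List.range_succ_eq_map, G.branchDart_zero]
  · simp [wend, branch, List.range_succ, opp, G.dtail_dinv]
  · refine List.Nodup.map_on (fun j hj k hk h => ?_) List.nodup_range
    simp only [List.mem_range] at hj hk
    exact (G.branchDart_eq_branchDart hd hd (by omega) (by omega) h).2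
  · intro c hc hinv
    obtain ⟨j, hj, rfl⟩ := G.mem_branch.1 hc
    obtain ⟨k, hk, hkj⟩ := G.mem_branch.1 hinv
    exact G.opp_ne_self hd (G.eq_opp_of_branchDart_eq_dinv hd hd hk hj hkj).symm

lemma branch_isCycle (hcyc : G.dtail (G.opp d) = G.dtail d) :
    G.IsCycleAt (G.dtail d) (G.branch d) := by
  obtain ⟨hwalk, hnb, hstart, hend, hdist⟩ := G.branch_isPath hd
  refine ⟨hwalk, hnb, hstart, hcyc ▸ hend, hdist, fun a b ha hb => ?_⟩
  simp only [branch, List.range_succ_eq_map, List.map_cons, List.head?_cons, Option.some.injEq,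
    G.branchDart_zero] at ha
  simp only [branch, List.range_succ, List.map_append, List.getLast?_append, List.map_cons,
    List.map_nil, List.getLast?_singleton, Option.some_or, Option.some.injEq] at hb
  subst ha hb
  intro h
  exact G.opp_ne_self hd (by rw [opp, ← h])

lemma vtxIn_branch_cases {x : G.V} (hx : G.vtxIn (G.branch d) x) :
    x = G.dtail d ∨ x = G.dtail (G.opp d) ∨
      ∃ j < G.lastIdx d, G.dhead (G.branchDart d j) = x := by
  rcases hx with ⟨c, hc, rfl⟩ | ⟨c, hc, rfl⟩ <;>
    obtain ⟨j, hj, rfl⟩ := G.mem_branch.1 hc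
  · cases j with
    | zero => exact Or.inl rfl
    | succ k =>
      exact Or.inr (Or.inr ⟨k, by omega, (G.dtail_branchDart_succ_of_lt hd (by omega)).symm⟩)
  · rcases hj.lt_or_eq with hj | rfl
    · exact Or.inr (Or.inr ⟨j, hj, rfl⟩)
    · exact Or.inr (Or.inl (by rw [opp, G.dtail_dinv]))

end OneBranch

section Apart

variable {a b : G.Dir} (ha : G.deg (G.dtail a) ≠ 2) (hb : G.deg (G.dtail b) ≠ 2)
  (hba : b ≠ a) (hba' : b ≠ G.opp a)
include ha hb hba hba'

lemma branch_edge_disjoint (e : G.E) : ¬(G.edgeIn (G.branch a) e ∧ G.edgeIn (G.branch b) e) := by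
  rintro ⟨hea, heb⟩
  obtain ⟨_, hca, rfl⟩ := G.edgeIn_iff_exists_mem.1 hea
  obtain ⟨_, hcb, hcc⟩ := G.edgeIn_iff_exists_mem.1 heb
  obtain ⟨j, hj, rfl⟩ := G.mem_branch.1 hca
  obtain ⟨k, hk, rfl⟩ := G.mem_branch.1 hcb
  rcases G.eq_or_eq_opp_of_fst_branchDart_eq ha hb hj hk hcc.symm with h | h
  exacts [hba h, hba' h]

lemma vtxIn_branch_inter {x : G.V} (hxa : G.vtxIn (G.branch a) x)
    (hxb : G.vtxIn (G.branch b) x) : x = G.dtail a ∨ x = G.dtail (G.opp a) := by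
  rcases G.vtxIn_branch_cases ha hxa with h | h | ⟨j, hj, rfl⟩
  · exact Or.inl h
  · exact Or.inr h
  have h2 := G.deg_dhead_of_lt_lastIdx ha hj
  rcases G.vtxIn_branch_cases hb hxb with h | h | ⟨k, hk, hkj⟩
  · exact absurd (h ▸ h2) hb
  · exact absurd (h ▸ h2) (G.deg_dtail_opp hb)
  · rcases G.eq_branchDart_or_eq_dinv ha hj (c := G.branchDart b (k + 1))
      (by rw [G.dtail_branchDart_succ_of_lt hb hk, hkj]) with h | h
    · exact absurd (G.branchDart_eq_branchDart hb ha hk hj h).1 hba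
    · exact absurd (G.eq_opp_of_branchDart_eq_dinv hb ha hk hj.le h) hba'

end Apart

lemma exists_edgeIn_branch (hconn : G.Connected) {D : List G.Dir}
    (hD : ∀ d ∈ D, G.deg (G.dtail d) ≠ 2) (hne : D ≠ [])
    (hcover : ∀ c, G.deg (G.dtail c) ≠ 2 → ∃ d ∈ D, c = d ∨ c = G.opp d) (e : G.E) :
    ∃ d ∈ D, G.edgeIn (G.branch d) e := by
  have hdart : ∀ c : G.Dir, (∃ d ∈ D, G.vtxIn (G.branch d) (G.dtail c)) →
      ∃ d ∈ D, c ∈ G.branch d ∨ G.dinv c ∈ G.branch d := by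
    rintro c ⟨d, hdD, hc⟩
    by_cases h2 : G.deg (G.dtail c) = 2
    · refine ⟨d, hdD, ?_⟩
      rcases G.vtxIn_branch_cases (hD d hdD) hc with h | h | ⟨j, hj, hjc⟩
      · exact absurd (h ▸ h2) (hD d hdD)
      · exact absurd (h ▸ h2) (G.deg_dtail_opp (hD d hdD))
      · rcases G.eq_branchDart_or_eq_dinv (hD d hdD) hj hjc.symm with rfl | rfl
        · exact Or.inl (G.mem_branch.2 ⟨_, hj, rfl⟩)
        · exact Or.inr (by rw [G.dinv_dinv]; exact G.mem_branch.2 ⟨_, hj.le, rfl⟩)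
    · obtain ⟨d, hdD, h | h⟩ := hcover c h2
      exacts [⟨d, hdD, Or.inl (h ▸ G.start_mem_branch d)⟩,
        ⟨d, hdD, Or.inr (h ▸ G.dinv_opp_mem_branch d)⟩]
  have hreach : ∀ x, ∃ d ∈ D, G.vtxIn (G.branch d) x := by
    obtain ⟨d₀, hd₀⟩ := List.exists_mem_of_ne_nil D hne
    intro x
    induction hconn.2 (G.dtail d₀) x with
    | refl => exact ⟨d₀, hd₀, Or.inl ⟨d₀, G.start_mem_branch d₀, rfl⟩⟩
    | tail _ hadj ih =>
      obtain ⟨c, rfl, rfl⟩ := hadj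
      obtain ⟨d, hdD, hc | hc⟩ := hdart c ih
      exacts [⟨d, hdD, Or.inr ⟨c, hc, rfl⟩⟩,
        ⟨d, hdD, Or.inl ⟨_, hc, G.dtail_dinv c⟩⟩]
  obtain ⟨d, hdD, h | h⟩ := hdart (e, true) (hreach _)
  exacts [⟨d, hdD, Or.inl h⟩, ⟨d, hdD, Or.inr h⟩]

end Branch

section Classification

variable [Finite G.E]

lemma degrees_of_eulerChar_eq_neg_one [Finite G.V] (hconn : G.Connected)
    (hleaf : ∀ v, G.deg v ≠ 1) (hchi : G.eulerChar = -1) :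
    (∃ v, G.deg v = 4 ∧ ∀ w, G.deg w ≠ 2 → w = v) ∨
      ∃ u v, u ≠ v ∧ G.deg u = 3 ∧ G.deg v = 3 ∧
        ∀ w, G.deg w ≠ 2 → w = u ∨ w = v := by
  classical
  have := Fintype.ofFinite G.V
  have hE : Nat.card G.E = Fintype.card G.V + 1 := by
    rw [eulerChar, Nat.card_eq_fintype_card (α := G.V)] at hchi
    omega
  have : Nonempty G.E := Nat.card_pos_iff.1 (by omega) |>.1
  have hdeg v : 2 ≤ G.deg v := by
    have := G.deg_ne_zero hconn v
    have := hleaf v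
    omega
  have hexcess : ∑ v, (G.deg v - 2) = 2 := by
    have hsum := G.sum_deg
    have hsplit : ∑ v, G.deg v = ∑ v, (G.deg v - 2) + ∑ _v : G.V, 2 := by
      rw [← Finset.sum_add_distrib]
      exact Finset.sum_congr rfl fun v _ => (Nat.sub_add_cancel (hdeg v)).symm
    rw [Finset.sum_const, Finset.card_univ, smul_eq_mul] at hsplit
    omega
  have hpos w (hw : G.deg w ≠ 2) : G.deg w - 2 ≠ 0 := by have := hdeg w; omega
  rcases Fintype.exists_of_sum_eq_two hexcess with
    ⟨v, hv, hrest⟩ | ⟨u, v, huv, hu, hv, hrest⟩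
  · exact Or.inl ⟨v, by have := hdeg v; omega, fun w hw => hrest w (hpos w hw)⟩
  · exact Or.inr ⟨u, v, huv, by have := hdeg u; omega, by have := hdeg v; omega,
      fun w hw => hrest w (hpos w hw)⟩

lemma isFigureEight_of_deg_eq_four (hconn : G.Connected) {v : G.V} (hv : G.deg v = 4)
    (hend : ∀ w, G.deg w ≠ 2 → w = v) : G.IsFigureEight := by
  obtain ⟨a, ha, -⟩ := G.exists_dtail_eq_not_mem (x := v) [] (by simp [hv])
  obtain ⟨b, hb, hab⟩ := G.exists_dtail_eq_not_mem (x := v) [a, G.opp a] (by simp [hv])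
  simp only [List.mem_cons, List.not_mem_nil, or_false, not_or] at hab
  have ha2 : G.deg (G.dtail a) ≠ 2 := by rw [ha]; omega
  have hb2 : G.deg (G.dtail b) ≠ 2 := by rw [hb]; omega
  have hoa := hend _ (G.deg_dtail_opp ha2)
  have hob := hend _ (G.deg_dtail_opp hb2)
  have hnd : [a, G.opp a, b, G.opp b].Nodup := by
    simp only [List.nodup_cons, List.mem_cons, List.not_mem_nil, or_false, not_or,
      List.nodup_nil, not_false_eq_true, and_true]
    exact ⟨⟨(G.opp_ne_self ha2).symm, Ne.symm hab.1, G.ne_opp_comm hb2 hab.2⟩,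
      ⟨Ne.symm hab.2, fun h => hab.1 ((G.opp_inj ha2 hb2).1 h).symm⟩,
      (G.opp_ne_self hb2).symm⟩
  have hcover (x : G.Dir) (hx : G.deg (G.dtail x) ≠ 2) :
      ∃ d ∈ [a, b], x = d ∨ x = G.opp d := by
    have := G.mem_of_length_eq_deg hnd (by simp [ha, hb, hoa, hob]) (by simp [hv]) (hend _ hx)
    simp only [List.mem_cons, List.not_mem_nil, or_false] at this
    rcases this with rfl | rfl | rfl | rfl <;> simp
  refine ⟨v, G.branch a, G.branch b, ha ▸ G.branch_isCycle ha2 (hoa.trans ha.symm),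
    hb ▸ G.branch_isCycle hb2 (hob.trans hb.symm), G.branch_edge_disjoint ha2 hb2 hab.1 hab.2,
    fun x hxa hxb => ?_, fun e => ?_⟩
  · rcases G.vtxIn_branch_inter ha2 hb2 hab.1 hab.2 hxa hxb with h | h
    exacts [h.trans ha, h.trans hoa]
  · obtain ⟨d, hd, he⟩ := G.exists_edgeIn_branch hconn (by simp [ha2, hb2]) (by simp) hcover e
    simp only [List.mem_cons, List.not_mem_nil, or_false] at hd
    rcases hd with rfl | rfl
    exacts [Or.inl he, Or.inr he]

section Assembly

variable (hconn : G.Connected) {u v : G.V} (huv : u ≠ v) {a b c : G.Dir}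
  (ha2 : G.deg (G.dtail a) ≠ 2) (hb2 : G.deg (G.dtail b) ≠ 2) (hc2 : G.deg (G.dtail c) ≠ 2)
  (hcover : ∀ x, G.deg (G.dtail x) ≠ 2 → ∃ d ∈ [a, b, c], x = d ∨ x = G.opp d)
include hconn huv ha2 hb2 hc2 hcover

lemma isBarbell_of_branches (ha : G.dtail a = u) (hoa : G.dtail (G.opp a) = u)
    (hb : G.dtail b = u) (hob : G.dtail (G.opp b) = v) (hc : G.dtail c = v)
    (hoc : G.dtail (G.opp c) = v) (hba : b ≠ a) (hba' : b ≠ G.opp a) :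
    G.IsBarbell := by
  have hne {x y : G.Dir} (hx : G.dtail x = u) (hy : G.dtail y = v) : y ≠ x := fun h =>
    huv (by rw [← hx, ← hy, h])
  refine ⟨u, v, G.branch a, G.branch c, G.branch b, huv,
    ha ▸ G.branch_isCycle ha2 (hoa.trans ha.symm),
    hc ▸ G.branch_isCycle hc2 (hoc.trans hc.symm),
    hb ▸ hob ▸ G.branch_isPath hb2,
    G.branch_edge_disjoint ha2 hc2 (hne ha hc) (hne hoa hc),
    G.branch_edge_disjoint ha2 hb2 hba hba',
    G.branch_edge_disjoint hc2 hb2 (hne hb hc).symm (hne hb hoc).symm,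
    fun x hxa hxc => ?_, fun x hxb hxa => ?_, fun x hxb hxc => ?_, fun e => ?_⟩
  · have hxu := G.vtxIn_branch_inter ha2 hc2 (hne ha hc) (hne hoa hc) hxa hxc
    have hxv := G.vtxIn_branch_inter hc2 ha2 (hne ha hc).symm (hne ha hoc).symm hxc hxa
    rw [ha, hoa, or_self] at hxu
    rw [hc, hoc, or_self] at hxv
    exact huv (hxu.symm.trans hxv)
  · simpa [ha, hoa] using G.vtxIn_branch_inter ha2 hb2 hba hba' hxa hxb
  · simpa [hc, hoc] using
      G.vtxIn_branch_inter hc2 hb2 (hne hb hc).symm (hne hb hoc).symm hxc hxb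
  · obtain ⟨d, hd, he⟩ :=
      G.exists_edgeIn_branch hconn (by simp [ha2, hb2, hc2]) (by simp) hcover e
    simp only [List.mem_cons, List.not_mem_nil, or_false] at hd
    rcases hd with rfl | rfl | rfl
    exacts [Or.inl he, Or.inr (Or.inr he), Or.inr (Or.inl he)]

lemma isTheta_of_branches (ha : G.dtail a = u) (hb : G.dtail b = u) (hc : G.dtail c = u)
    (hoa : G.dtail (G.opp a) = v) (hob : G.dtail (G.opp b) = v) (hoc : G.dtail (G.opp c) = v)
    (hba : b ≠ a) (hca : c ≠ a) (hcb : c ≠ b) : G.IsTheta := by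
  have hne {x y : G.Dir} (hx : G.dtail x = u) (hy : G.dtail y = v) : x ≠ y := fun h =>
    huv (by rw [← hx, ← hy, h])
  have hpath {d : G.Dir} (hd2 : G.deg (G.dtail d) ≠ 2) (hd : G.dtail d = u)
      (hod : G.dtail (G.opp d) = v) : G.IsPathBetween u v (G.branch d) :=
    hd ▸ hod ▸ G.branch_isPath hd2
  have hinter {x y : G.Dir} (hx2 : G.deg (G.dtail x) ≠ 2) (hy2 : G.deg (G.dtail y) ≠ 2)
      (hx : G.dtail x = u) (hy : G.dtail y = u) (hox : G.dtail (G.opp x) = v) (hyx : y ≠ x)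
      (w : G.V) (hwx : G.vtxIn (G.branch x) w) (hwy : G.vtxIn (G.branch y) w) :
      w = u ∨ w = v := by
    simpa [hx, hox] using G.vtxIn_branch_inter hx2 hy2 hyx (hne hy hox) hwx hwy
  refine ⟨u, v, G.branch a, G.branch b, G.branch c, huv, hpath ha2 ha hoa, hpath hb2 hb hob,
    hpath hc2 hc hoc, G.branch_edge_disjoint ha2 hb2 hba (hne hb hoa),
    G.branch_edge_disjoint ha2 hc2 hca (hne hc hoa),
    G.branch_edge_disjoint hb2 hc2 hcb (hne hc hob),
    hinter ha2 hb2 ha hb hoa hba, hinter ha2 hc2 ha hc hoa hca, hinter hb2 hc2 hb hc hob hcb,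
    fun e => ?_⟩
  obtain ⟨d, hd, he⟩ :=
    G.exists_edgeIn_branch hconn (by simp [ha2, hb2, hc2]) (by simp) hcover e
  simp only [List.mem_cons, List.not_mem_nil, or_false] at hd
  rcases hd with rfl | rfl | rfl
  exacts [Or.inl he, Or.inr (Or.inl he), Or.inr (Or.inr he)]

end Assembly

section DegreeThree

variable (hconn : G.Connected) {u v : G.V} (huv : u ≠ v) (hu : G.deg u = 3) (hv : G.deg v = 3)
  (hend : ∀ w, G.deg w ≠ 2 → w = u ∨ w = v)
include hconn huv hu hv hend

lemma isBarbell_of_deg_eq_three {a : G.Dir} (ha : G.dtail a = u)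
    (hoa : G.dtail (G.opp a) = u) : G.IsBarbell := by
  have ha2 : G.deg (G.dtail a) ≠ 2 := by rw [ha]; omega
  obtain ⟨b, hb, hab⟩ := G.exists_dtail_eq_not_mem (x := u) [a, G.opp a] (by simp [hu])
  simp only [List.mem_cons, List.not_mem_nil, or_false, not_or] at hab
  have hb2 : G.deg (G.dtail b) ≠ 2 := by rw [hb]; omega
  have hat_u (x : G.Dir) (hx : G.dtail x = u) : x = a ∨ x = G.opp a ∨ x = b := by
    simpa using G.mem_of_length_eq_deg (L := [a, G.opp a, b])
      (by simp [(G.opp_ne_self ha2).symm, Ne.symm hab.1, Ne.symm hab.2])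
      (by simp [ha, hoa, hb]) (by simp [hu]) hx
  have hob : G.dtail (G.opp b) = v := by
    refine (hend _ (G.deg_dtail_opp hb2)).resolve_left fun h => ?_
    rcases hat_u _ h with h | h | h
    · exact hab.2 (by rw [← h, G.opp_opp hb2])
    · exact hab.1 ((G.opp_inj hb2 ha2).1 h)
    · exact G.opp_ne_self hb2 h
  obtain ⟨c, hc, hbc⟩ := G.exists_dtail_eq_not_mem (x := v) [G.opp b] (by simp [hv])
  simp only [List.mem_singleton] at hbc
  have hc2 : G.deg (G.dtail c) ≠ 2 := by rw [hc]; omega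
  have hoc : G.dtail (G.opp c) = v := by
    refine (hend _ (G.deg_dtail_opp hc2)).resolve_left fun h => ?_
    rcases hat_u _ h with h | h | h
    · exact huv (by rw [← hoa, ← h, G.opp_opp hc2, hc])
    · exact huv (by rw [← ha, ← (G.opp_inj hc2 ha2).1 h, hc])
    · exact hbc (by rw [← h, G.opp_opp hc2])
  have hcb : c ≠ b := ne_of_apply_ne G.dtail (by rw [hb, hc]; exact huv.symm)
  have hat_v (x : G.Dir) (hx : G.dtail x = v) : x = G.opp b ∨ x = c ∨ x = G.opp c := by
    simpa using G.mem_of_length_eq_deg (L := [G.opp b, c, G.opp c])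
      (by simp [Ne.symm hbc, (G.opp_inj hb2 hc2).not.2 hcb.symm, (G.opp_ne_self hc2).symm])
      (by simp [hob, hc, hoc]) (by simp [hv]) hx
  refine G.isBarbell_of_branches hconn huv ha2 hb2 hc2 (fun x hx => ?_) ha hoa hb hob hc hoc
    hab.1 hab.2
  rcases hend _ hx with h | h
  · rcases hat_u x h with rfl | rfl | rfl <;> simp
  · rcases hat_v x h with rfl | rfl | rfl <;> simp

lemma isTheta_of_deg_eq_three (hno : ∀ a, G.dtail a = u → G.dtail (G.opp a) ≠ u) :
    G.IsTheta := by
  obtain ⟨a, ha, -⟩ := G.exists_dtail_eq_not_mem (x := u) [] (by simp [hu])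
  obtain ⟨b, hb, hab⟩ := G.exists_dtail_eq_not_mem (x := u) [a] (by simp [hu])
  obtain ⟨c, hc, habc⟩ := G.exists_dtail_eq_not_mem (x := u) [a, b] (by simp [hu])
  simp only [List.mem_cons, List.not_mem_nil, or_false, not_or] at hab habc
  have h2 {x : G.Dir} (hx : G.dtail x = u) : G.deg (G.dtail x) ≠ 2 := by rw [hx]; omega
  have hopp {x : G.Dir} (hx : G.dtail x = u) : G.dtail (G.opp x) = v :=
    (hend _ (G.deg_dtail_opp (h2 hx))).resolve_left (hno x hx)
  have hnd : [a, b, c].Nodup := by simp [Ne.symm hab, Ne.symm habc.1, Ne.symm habc.2]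
  have htail : ∀ x ∈ [a, b, c], G.dtail x = u := by simp [ha, hb, hc]
  refine G.isTheta_of_branches hconn huv (h2 ha) (h2 hb) (h2 hc) (fun x hx => ?_) ha hb hc
    (hopp ha) (hopp hb) (hopp hc) hab habc.1 habc.2
  rcases hend _ hx with h | h
  · exact ⟨x, G.mem_of_length_eq_deg hnd htail (by simp [hu]) h, Or.inl rfl⟩
  · have hnd' := hnd.map_on fun x hx y hy h =>
      (G.opp_inj (h2 (htail x hx)) (h2 (htail y hy))).1 h
    obtain ⟨d, hd, rfl⟩ := List.mem_map.1 <| G.mem_of_length_eq_deg hnd'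
      (List.forall_mem_map.2 fun x hx => hopp (htail x hx)) (by simp [hv]) h
    exact ⟨d, hd, Or.inr rfl⟩

lemma isBarbell_or_isTheta_of_deg_eq_three : G.IsBarbell ∨ G.IsTheta := by
  by_cases hloop : ∃ a, G.dtail a = u ∧ G.dtail (G.opp a) = u
  · obtain ⟨a, ha, hoa⟩ := hloop
    exact Or.inl (G.isBarbell_of_deg_eq_three hconn huv hu hv hend ha hoa)
  · push Not at hloop
    exact Or.inr (G.isTheta_of_deg_eq_three hconn huv hu hv hend hloop)

end DegreeThree

end Classification

end MGraph

/-- Every finite connected graph with Euler characteristic `-1` and no vertex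
of degree 1 is a figure-eight graph, a barbell graph, or a theta graph. -/
theorem classify_eulerChar_neg_one (G : MGraph) [Finite G.V] [Finite G.E]
    (hconn : G.Connected) (hleaf : ∀ v : G.V, G.deg v ≠ 1)
    (hchi : G.eulerChar = -1) :
    G.IsFigureEight ∨ G.IsBarbell ∨ G.IsTheta := by
  rcases G.degrees_of_eulerChar_eq_neg_one hconn hleaf hchi with
    ⟨v, hv, hend⟩ | ⟨u, v, huv, hu, hv, hend⟩
  · exact Or.inl (G.isFigureEight_of_deg_eq_four hconn hv hend)
  · exact Or.inr (G.isBarbell_or_isTheta_of_deg_eq_three hconn huv hu hv hend)
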